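/- Let n ≥ 1 and let P be an n×n matrix over ℚ. Consider row vectors in dimension 2n written as [x | s] with x, s ∈ ℚ^{1×n}. There exist 2n matrices G₁, …, G_{2n} ∈ ℚ^{2n×2n}, each of which is a dot-product overwrite matrix U(dst;c) for some index dst and some coefficient vector c with c_dst = 0, such that for all x, s ∈ ℚ^{1×n}: [x | s] · G₁ · G₂ ⋯ G_{2n} = [xP | xP]. -/

import Mathlib

/-!
Write `xP` into the scratch block one coordinate at a time, `s_i ← x ⬝ᵥ (column i of P)`, then copy
the scratch block back into the main block, `x_i ← s_i`. Each overwrite reads only coordinates that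
no earlier overwrite has touched, so the product of the `2n` matrices acts as the two simultaneous
assignments.
-/

/-- The dot-product overwrite matrix
`U(dst; c) = I − e_dst e_dstᵀ + c e_dstᵀ` over an arbitrary finite index type. -/
def overwrite {ι : Type*} [Fintype ι] [DecidableEq ι] (K : Type*) [CommRing K]
    (dst : ι) (c : ι → K) : Matrix ι ι K :=
  1 - Matrix.vecMulVec (Pi.single dst 1) (Pi.single dst 1)
    + Matrix.vecMulVec c (Pi.single dst 1)

open Matrix Function

section Overwrite

variable {ι K : Type*} [Fintype ι] [DecidableEq ι] [CommRing K]

theorem vecMul_overwrite (r : ι → K) (dst : ι) (c : ι → K) :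
    r ᵥ* overwrite K dst c = update r dst (r ⬝ᵥ c) := by
  ext j
  rcases eq_or_ne j dst with rfl | h
  · simp [overwrite, vecMul_add, vecMul_sub, vecMul_vecMulVec]
  · simp [overwrite, vecMul_add, vecMul_sub, vecMul_vecMulVec, h]

theorem update_dotProduct_of_eq_zero {r c : ι → K} {dst : ι} (hc : c dst = 0) (v : K) :
    update r dst v ⬝ᵥ c = r ⬝ᵥ c := by
  refine Finset.sum_congr rfl fun j _ => ?_
  rcases eq_or_ne j dst with rfl | h <;> simp [*]

theorem vecMul_prod_ofFn_overwrite {m : ℕ} {dst : Fin m → ι} (hdst : Injective dst)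
    {c : Fin m → ι → K} (hc : ∀ i j, j < i → c i (dst j) = 0) (r : ι → K) :
    r ᵥ* (List.ofFn fun i => overwrite K (dst i) (c i)).prod = extend dst (fun i => r ⬝ᵥ c i) r := by
  induction m generalizing r with
  | zero => ext k; simp [extend_apply', IsEmpty.exists_iff]
  | succ m ih =>
    have hdst' : Injective fun i : Fin m => dst i.succ := hdst.comp (Fin.succ_injective m)
    rw [List.ofFn_succ, List.prod_cons, ← vecMul_vecMul, vecMul_overwrite,
      ih hdst' fun i j h => hc _ _ (Fin.succ_lt_succ_iff.2 h)]
    ext k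
    by_cases hk : ∃ i, dst i = k
    · obtain ⟨i, rfl⟩ := hk
      rw [hdst.extend_apply]
      cases i using Fin.cases with
      | zero =>
        have hfresh : ¬∃ i : Fin m, dst i.succ = dst 0 :=
          fun ⟨i, h⟩ => Fin.succ_ne_zero i (hdst h)
        rw [extend_apply' _ _ _ hfresh, update_self]
      | succ i =>
        exact (hdst'.extend_apply _ _ i).trans
          (update_dotProduct_of_eq_zero (hc _ _ (Fin.succ_pos i)) _)
    · have hk' : ¬∃ i : Fin m, dst i.succ = k := fun ⟨i, h⟩ => hk ⟨_, h⟩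
      rw [extend_apply' _ _ _ hk, extend_apply' _ _ _ hk',
        update_of_ne fun h => hk ⟨0, h.symm⟩]

end Overwrite

theorem extend_inl_sumElim {α β γ : Type*} (g x : α → γ) (s : β → γ) :
    extend Sum.inl g (Sum.elim x s) = Sum.elim g s := by
  ext (k | k)
  · exact Sum.inl_injective.extend_apply _ _ k
  · exact extend_apply' _ _ _ fun ⟨_, h⟩ => Sum.inl_ne_inr h

theorem extend_inr_sumElim {α β γ : Type*} (g s : β → γ) (x : α → γ) :
    extend Sum.inr g (Sum.elim x s) = Sum.elim x g := by
  ext (k | k)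
  · exact extend_apply' _ _ _ fun ⟨_, h⟩ => Sum.inr_ne_inl h
  · exact Sum.inr_injective.extend_apply _ _ k

section Scratch

variable {ι K : Type*} [Fintype ι] [DecidableEq ι] [CommRing K] {n : ℕ}

def scratchWrite (P : Matrix ι (Fin n) K) : Fin n → Matrix (ι ⊕ Fin n) (ι ⊕ Fin n) K :=
  fun i => overwrite K (Sum.inr i) (Sum.elim (Pᵀ i) 0)

def scratchCopy (n : ℕ) (K : Type*) [CommRing K] :
    Fin n → Matrix (Fin n ⊕ Fin n) (Fin n ⊕ Fin n) K :=
  fun i => overwrite K (Sum.inl i) (Sum.elim 0 (Pi.single i 1))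

theorem sumElim_vecMul_prod_scratchWrite (P : Matrix ι (Fin n) K) (x : ι → K) (s : Fin n → K) :
    Sum.elim x s ᵥ* (List.ofFn (scratchWrite P)).prod = Sum.elim x (x ᵥ* P) := by
  refine (vecMul_prod_ofFn_overwrite (c := fun i => Sum.elim (Pᵀ i) 0) Sum.inr_injective
    (fun _ _ _ => rfl) _).trans ?_
  simp only [sumElim_dotProduct_sumElim, dotProduct_zero, add_zero]
  exact extend_inr_sumElim _ _ _

theorem sumElim_vecMul_prod_scratchCopy (x s : Fin n → K) :
    Sum.elim x s ᵥ* (List.ofFn (scratchCopy n K)).prod = Sum.elim s s := by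
  refine (vecMul_prod_ofFn_overwrite (c := fun i => Sum.elim 0 (Pi.single i 1))
    Sum.inl_injective (fun _ _ _ => rfl) _).trans ?_
  simp only [sumElim_dotProduct_sumElim, dotProduct_zero, zero_add, dotProduct_single_one]
  exact extend_inl_sumElim _ _ _

end Scratch

theorem apply_matrix_with_scratch_general {n : ℕ}
    (P : Matrix (Fin n) (Fin n) ℚ) :
    ∃ G : Fin (2 * n) → Matrix (Fin n ⊕ Fin n) (Fin n ⊕ Fin n) ℚ,
      (∀ i, ∃ (dst : Fin n ⊕ Fin n) (c : Fin n ⊕ Fin n → ℚ),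
          c dst = 0 ∧ G i = overwrite ℚ dst c) ∧
      ∀ x s : Fin n → ℚ,
        Matrix.vecMul (Sum.elim x s) (List.ofFn G).prod =
          Sum.elim (Matrix.vecMul x P) (Matrix.vecMul x P) := by
  refine ⟨Fin.append (scratchWrite P) (scratchCopy n ℚ) ∘ Fin.cast (two_mul n), fun i => ?_,
    fun x s => ?_⟩
  · rw [Function.comp_apply]
    induction Fin.cast (two_mul n) i using Fin.addCases with
    | left j => exact ⟨Sum.inr j, Sum.elim (Pᵀ j) 0, rfl, Fin.append_left _ _ j⟩
    | right j => exact ⟨Sum.inl j, Sum.elim 0 (Pi.single j 1), rfl, Fin.append_right _ _ j⟩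
  · have hsplit : List.ofFn (Fin.append (scratchWrite P) (scratchCopy n ℚ) ∘ Fin.cast (two_mul n))
        = List.ofFn (scratchWrite P) ++ List.ofFn (scratchCopy n ℚ) := by
      rw [← List.ofFn_fin_append, List.ofFn_congr (two_mul n)]
      rfl
    rw [hsplit, List.prod_append, ← vecMul_vecMul, sumElim_vecMul_prod_scratchWrite,
      sumElim_vecMul_prod_scratchCopy]

/-- any `n×n` matrix `P` over `ℚ` can be applied to the main part of a
row vector `[x | s]` in dimension `2n` (main part indexed by `Sum.inl`, scratch by
`Sum.inr`) by a product of `2n` dot-product overwrite matrices, yielding `[xP | xP]`. -/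
theorem apply_matrix_with_scratch {n : ℕ} (hn : 1 ≤ n)
    (P : Matrix (Fin n) (Fin n) ℚ) :
    ∃ G : Fin (2 * n) → Matrix (Fin n ⊕ Fin n) (Fin n ⊕ Fin n) ℚ,
      (∀ i, ∃ (dst : Fin n ⊕ Fin n) (c : Fin n ⊕ Fin n → ℚ),
          c dst = 0 ∧ G i = overwrite ℚ dst c) ∧
      ∀ x s : Fin n → ℚ,
        Matrix.vecMul (Sum.elim x s) (List.ofFn G).prod =
          Sum.elim (Matrix.vecMul x P) (Matrix.vecMul x P) :=
  apply_matrix_with_scratch_general P
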